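/- Let X = X₁ ∧ ⋯ ∧ Xₙ be a decomposable n-vector in ΛⁿT_m M for M = ΛⁿT*(𝒳 × 𝒴) restricted to the de Donder–Weyl submanifold, with coordinates (x^μ, y^i) on the base and ω = dx¹∧⋯∧dxⁿ, ω^i_μ = dy^i ∧ (∂_μ ⌟ ω). If ω(X) ≠ 0, then for every 1 ≤ p ≤ n and multi-indices μ₁<⋯<μ_p, i₁<⋯<i_p, the Plücker identity (ω(X))^{p−1} · ω^{i₁⋯i_p}_{μ₁⋯μ_p}(X) = det( ω^{i_β}_{μ_α}(X) )_{1≤α,β≤p} holds; consequently all values ω^{i₁⋯i_p}_{μ₁⋯μ_p}(X) are determined by ω(X) and the matrix ( ω^i_μ(X) ). -/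
import Mathlib

open Matrix

/-- the Plücker identity for decomposable `n`-vectors in the de Donder–Weyl
setting.  For `X = X₁ ∧ ⋯ ∧ Xₙ` a decomposable `n`-vector on `ℝⁿ × ℝᵏ`, with
`ω = dx¹∧⋯∧dxⁿ` and `ω^{i₁⋯i_p}_{μ₁⋯μ_p}` the forms obtained by replacing the slots
`μ₁ < ⋯ < μ_p` of `ω` by `dy^{i₁},…,dy^{i_p}`, one has
`ω(X)^{p-1} · ω^{i₁⋯i_p}_{μ₁⋯μ_p}(X) = det(ω^{i_β}_{μ_α}(X))`. -/
theorem stmt11 (n k p : ℕ) (hp1 : 1 ≤ p) (hpn : p ≤ n)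
    (X : Fin n → (Fin n → ℝ) × (Fin k → ℝ))
    (μ : Fin p → Fin n) (hμ : StrictMono μ)
    (I : Fin p → Fin k) (hI : StrictMono I)
    (hω : Matrix.det (Matrix.of fun r c : Fin n => (X c).1 r) ≠ 0) :
    (Matrix.det (Matrix.of fun r c : Fin n => (X c).1 r)) ^ (p - 1) *
      Matrix.det (Matrix.of fun r c : Fin n =>
        if h : ∃ α : Fin p, μ α = r then (X c).2 (I h.choose) else (X c).1 r)
    = Matrix.det (Matrix.of fun α β : Fin p =>
        Matrix.det (Matrix.of fun r c : Fin n =>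
          if r = μ α then (X c).2 (I β) else (X c).1 r)) := by
  classical
  set A : Matrix (Fin n) (Fin n) ℝ := Matrix.of fun r c => (X c).1 r with hA
  set Y : Fin p → Fin n → ℝ := fun α c => (X c).2 (I α) with hY
  set B : Matrix (Fin n) (Fin n) ℝ := Matrix.of (fun r c =>
    if h : ∃ α : Fin p, μ α = r then (X c).2 (I h.choose) else (X c).1 r) with hB
  have hBrow : ∀ (α : Fin p) (c : Fin n), B (μ α) c = Y α c := by
    intro α c
    have h : ∃ β : Fin p, μ β = μ α := ⟨α, rfl⟩
    have hc : h.choose = α := hμ.injective h.choose_spec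
    simp only [hB, Matrix.of_apply, dif_pos h, hc, hY]
  have hBrow' : ∀ r, r ∉ Set.range μ → ∀ c, B r c = A r c := by
    intro r hr c
    have h : ¬ ∃ α : Fin p, μ α = r := by simpa [Set.range] using hr
    simp only [hB, Matrix.of_apply, dif_neg h, hA]
  set M : Matrix (Fin p) (Fin p) ℝ := Matrix.of (fun α β =>
    Matrix.det (Matrix.of fun r c : Fin n =>
      if r = μ α then (X c).2 (I β) else (X c).1 r)) with hM
  have hM' : ∀ α β, M α β = (A.updateRow (μ α) (Y β)).det := by
    intro α β
    simp only [hM, Matrix.of_apply]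
    congr 1
    ext r c
    simp [Matrix.updateRow_apply, hA, hY]
  set C : Matrix (Fin n) (Fin n) ℝ := B * A.adjugate with hC
  have hC1 : ∀ (α β : Fin p), C (μ α) (μ β) = M β α := by
    intro α β
    have h1 : (A.updateRow (μ β) (Y α)).det = ∑ c, A.adjugate c (μ β) * Y α c := by
      rw [← Matrix.cramer_transpose_apply, Matrix.cramer_eq_adjugate_mulVec,
        ← Matrix.adjugate_transpose]
      simp [Matrix.mulVec, dotProduct, Matrix.transpose_apply]
    rw [hM' β α, h1, hC, Matrix.mul_apply]
    exact Finset.sum_congr rfl fun c _ => by rw [hBrow]; ring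
  have hC2 : ∀ r, r ∉ Set.range μ → ∀ s, C r s = if r = s then A.det else 0 := by
    intro r hr s
    have h : C r s = (A * A.adjugate) r s := by
      rw [hC, Matrix.mul_apply, Matrix.mul_apply]
      exact Finset.sum_congr rfl fun c _ => by rw [hBrow' r hr]
    rw [h, Matrix.mul_adjugate]
    simp [Matrix.one_apply]
  let e : Fin p ⊕ {r : Fin n // r ∉ Set.range μ} ≃ Fin n :=
    ((Equiv.ofInjective μ hμ.injective).sumCongr (Equiv.refl _)).trans
      (Equiv.sumCompl (· ∈ Set.range μ))
  have he1 : ∀ α : Fin p, e (Sum.inl α) = μ α := fun α => rfl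
  have he2 : ∀ r, e (Sum.inr r) = r.1 := fun r => rfl
  have hD : C.submatrix e e =
      Matrix.fromBlocks Mᵀ (Matrix.of fun α r => C (μ α) r.1) 0
        (A.det • (1 : Matrix {r : Fin n // r ∉ Set.range μ} _ ℝ)) := by
    ext i j
    cases i with
    | inl α =>
      cases j with
      | inl β =>
        simp only [Matrix.submatrix_apply, he1, Matrix.fromBlocks_apply₁₁,
          Matrix.transpose_apply]
        exact hC1 α β
      | inr r => simp [he1, he2]
    | inr r =>
      cases j with
      | inl β =>
        simp only [Matrix.submatrix_apply, he1, he2, Matrix.fromBlocks_apply₂₁,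
          Matrix.zero_apply]
        rw [hC2 r.1 r.2]
        have : r.1 ≠ μ β := fun h => r.2 ⟨β, h.symm⟩
        simp [this]
      | inr r' =>
        simp only [Matrix.submatrix_apply, he2, Matrix.fromBlocks_apply₂₂,
          Matrix.smul_apply, Matrix.one_apply, smul_eq_mul]
        rw [hC2 r.1 r.2]
        by_cases h : r = r'
        · simp [h]
        · have : r.1 ≠ r'.1 := fun hh => h (Subtype.ext hh)
          simp [h, this]
  have hcard : Fintype.card {r : Fin n // r ∉ Set.range μ} = n - p := by
    have h1 : Fintype.card {r : Fin n // r ∈ Set.range μ} = p := by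
      rw [Fintype.card_eq.mpr ⟨(Equiv.ofInjective μ hμ.injective).symm⟩, Fintype.card_fin]
    rw [Fintype.card_subtype_compl, h1, Fintype.card_fin]
  have hdetC : C.det = M.det * A.det ^ (n - p) := by
    rw [← Matrix.det_submatrix_equiv_self e, hD, Matrix.det_fromBlocks_zero₂₁,
      Matrix.det_transpose, Matrix.det_smul, Matrix.det_one, mul_one, hcard]
  have hdetC' : C.det = B.det * A.det ^ (n - 1) := by
    rw [hC, Matrix.det_mul, Matrix.det_adjugate, Fintype.card_fin]
  have key : B.det * A.det ^ (n - 1) = M.det * A.det ^ (n - p) := by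
    rw [← hdetC', hdetC]
  have hpow : (p - 1) + (n - p) = n - 1 := by omega
  have h2 : (A.det ^ (p - 1) * B.det) * A.det ^ (n - p) = M.det * A.det ^ (n - p) := by
    rw [mul_right_comm, ← pow_add, hpow, mul_comm (A.det ^ (n-1)) B.det, key]
  have := mul_right_cancel₀ (pow_ne_zero (n - p) hω) h2
  exact this
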